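/- Fix α ∈ (0,1), ρ ∈ 𝒞 and P ∈ 𝒫^ρ. If the left-derivative ψ₋ of ρ is continuous on ℝ, or if P is non-atomic, then G^ρ is continuous at the point θ^ρ_α(P) = inf{θ ∈ ℝ : G^ρ(θ) ≥ α}, and consequently G^ρ(θ^ρ_α(P)) = α. -/

import Mathlib

open MeasureTheory Set Filter

noncomputable section

/-- The class `𝒞` of loss functions: convex, nonnegative, even, vanishing only at `0`. -/
def LossClass (ρ : ℝ → ℝ) : Prop :=
  ConvexOn ℝ Set.univ ρ ∧ (∀ t, 0 ≤ ρ t) ∧ (∀ t, ρ (-t) = ρ t) ∧ (∀ t, ρ t = 0 ↔ t = 0)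

/-- `ψ` is the left-derivative of `ρ`. -/
def IsLeftDeriv (ρ ψ : ℝ → ℝ) : Prop :=
  ∀ x : ℝ, HasDerivWithinAt ρ (ψ x) (Set.Iio x) x

/-- The asymmetric loss `ρ_α(t) = ((1−α)·𝟙[t<0] + α·𝟙[t>0])·ρ(t)`. -/
def rhoA (ρ : ℝ → ℝ) (α t : ℝ) : ℝ :=
  ((1 - α) * (if t < 0 then 1 else 0) + α * (if 0 < t then 1 else 0)) * ρ t

/-- The objective function `O^ρ(θ) = E[ρ_α(Z−θ) − ρ_α(Z)]`. -/
def Obj (ρ : ℝ → ℝ) (α : ℝ) (P : Measure ℝ) (θ : ℝ) : ℝ :=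
  ∫ z, (rhoA ρ α (z - θ) - rhoA ρ α z) ∂P

/-- `G^ρ(θ) = E[|ψ₋(Z−θ)|·𝟙[Z ≤ θ]] / E[|ψ₋(Z−θ)|]`. -/
def Gfun (ψ : ℝ → ℝ) (P : Measure ℝ) (θ : ℝ) : ℝ :=
  (∫ z, |ψ (z - θ)| * (if z ≤ θ then 1 else 0) ∂P) / ∫ z, |ψ (z - θ)| ∂P

/-- The order-`α` M-quantile `θ^ρ_α(P) = inf{θ : G^ρ(θ) ≥ α}`. -/
def MQuant (ψ : ℝ → ℝ) (P : Measure ℝ) (α : ℝ) : ℝ :=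
  sInf {θ : ℝ | α ≤ Gfun ψ P θ}

/-!
The left derivative `ψ` is monotone, negative on `(-∞, 0)`, nonpositive at `0` and positive on
`(0, ∞)`. Hence `|ψ (z - θ)| 𝟙[z ≤ θ] = ψ⁻ (z - θ)`, so `G = N / (N + M)` with
`N θ = E ψ⁻ (Z - θ)` and `M θ = E ψ⁺ (Z - θ)`, and the jump of the indicator disappears: `N` and `M`
are continuous at `θ` by dominated convergence as soon as `ψ` is continuous at `Z - θ` almost
surely, which holds when `ψ` is continuous, or when `P` has no atoms since a monotone function has
countably many discontinuities. As `θ → -∞`, `N → 0` while `M` stays bounded below, and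
symmetrically as `θ → +∞`; so `G → 0` at `-∞`, `G → 1` at `+∞`, and `{G ≥ α}` is closed, nonempty
and bounded below. It contains its infimum, to the left of which `G < α`.
-/

open scoped Topology

namespace LossClass

variable {ρ : ℝ → ℝ}

lemma map_zero (hρ : LossClass ρ) : ρ 0 = 0 := (hρ.2.2.2 0).2 rfl

lemma pos (hρ : LossClass ρ) {t : ℝ} (ht : t ≠ 0) : 0 < ρ t :=
  (hρ.2.1 t).lt_of_ne fun h => ht ((hρ.2.2.2 t).1 h.symm)

end LossClass

namespace IsLeftDeriv

variable {ρ ψ : ℝ → ℝ} {x y t : ℝ}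

lemma eq_derivWithin (hψ : IsLeftDeriv ρ ψ) (x : ℝ) : ψ x = derivWithin ρ (Iio x) x :=
  ((hψ x).derivWithin (uniqueDiffWithinAt_Iio x)).symm

lemma le_slope (hψ : IsLeftDeriv ρ ψ) (hρ : ConvexOn ℝ univ ρ) (hxy : x < y) :
    ψ x ≤ slope ρ x y := by
  have hx : x ∈ interior univ := by simp
  rw [hψ.eq_derivWithin]
  exact (hρ.leftDeriv_le_rightDeriv_of_mem_interior hx).trans
    (hρ.rightDeriv_le_slope_of_mem_interior hx (mem_univ y) hxy)

lemma slope_le (hψ : IsLeftDeriv ρ ψ) (hρ : ConvexOn ℝ univ ρ) (hxy : x < y) :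
    slope ρ x y ≤ ψ y :=
  hρ.slope_le_of_hasDerivWithinAt_Iio (mem_univ x) (mem_univ y) hxy (hψ y)

lemma monotone (hψ : IsLeftDeriv ρ ψ) (hρ : ConvexOn ℝ univ ρ) : Monotone ψ := by
  intro x y hxy
  rcases hxy.eq_or_lt with rfl | hxy
  · rfl
  · exact (hψ.le_slope hρ hxy).trans (hψ.slope_le hρ hxy)

lemma pos_of_pos (hψ : IsLeftDeriv ρ ψ) (hρ : LossClass ρ) (ht : 0 < t) : 0 < ψ t := by
  refine lt_of_lt_of_le ?_ (hψ.slope_le hρ.1 ht)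
  rw [slope_def_field, hρ.map_zero, sub_zero, sub_zero]
  exact div_pos (hρ.pos ht.ne') ht

lemma neg_of_neg (hψ : IsLeftDeriv ρ ψ) (hρ : LossClass ρ) (ht : t < 0) : ψ t < 0 := by
  refine (hψ.le_slope hρ.1 ht).trans_lt ?_
  rw [slope_def_field, hρ.map_zero, zero_sub, zero_sub, neg_div_neg_eq]
  exact div_neg_of_pos_of_neg (hρ.pos ht.ne) ht

lemma nonpos_of_nonpos (hψ : IsLeftDeriv ρ ψ) (hρ : LossClass ρ) (ht : t ≤ 0) : ψ t ≤ 0 := by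
  refine (hψ.monotone hρ.1 ht).trans ?_
  refine le_of_tendsto ((hasDerivWithinAt_iff_tendsto_slope' self_notMem_Iio).mp (hψ 0)) ?_
  filter_upwards [self_mem_nhdsWithin] with w (hw : w < 0)
  rw [slope_def_field, hρ.map_zero, sub_zero, sub_zero]
  exact (div_neg_of_pos_of_neg (hρ.pos hw.ne) hw).le

lemma ne_zero (hψ : IsLeftDeriv ρ ψ) (hρ : LossClass ρ) (ht : t ≠ 0) : ψ t ≠ 0 :=
  ht.lt_or_gt.elim (fun h => (hψ.neg_of_neg hρ h).ne) fun h => (hψ.pos_of_pos hρ h).ne'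

end IsLeftDeriv

lemma Monotone.integrable_comp_sub {ψ : ℝ → ℝ} (hψ : Monotone ψ) {P : Measure ℝ} {θ : ℝ}
    (hint : Integrable (fun z => |ψ (z - θ)|) P) : Integrable (fun z => ψ (z - θ)) P :=
  (integrable_norm_iff (hψ.measurable.comp (measurable_id.sub_const θ)).aestronglyMeasurable).1 hint

def shiftIntegral (h : ℝ → ℝ) (P : Measure ℝ) (θ : ℝ) : ℝ :=
  ∫ z, h (z - θ) ∂P

section shiftIntegral

variable {h ψ : ℝ → ℝ} {P : Measure ℝ}

lemma continuousAt_shiftIntegral (hψ : Monotone ψ)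
    (hint : ∀ θ, Integrable (fun z => |ψ (z - θ)|) P) (hmeas : Measurable h)
    (hle : ∀ t, |h t| ≤ |ψ t|) {θ₀ : ℝ} (hcont : ∀ᵐ z ∂P, ContinuousAt h (z - θ₀)) :
    ContinuousAt (shiftIntegral h P) θ₀ := by
  refine continuousAt_of_dominated
    (bound := fun z => |ψ (z - (θ₀ + 1))| + |ψ (z - (θ₀ - 1))|)
    (Eventually.of_forall fun θ => (hmeas.comp (measurable_id.sub_const θ)).aestronglyMeasurable)
    ?_ ((hint _).add (hint _)) ?_
  · filter_upwards [Icc_mem_nhds (sub_one_lt θ₀) (lt_add_one θ₀)] with θ hθ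
    refine ae_of_all _ fun z => (hle _).trans ?_
    exact (abs_le_max_abs_abs (hψ (by linarith [hθ.2])) (hψ (by linarith [hθ.1]))).trans
      (max_le_add_of_nonneg (abs_nonneg _) (abs_nonneg _))
  · filter_upwards [hcont] with z hz
    exact hz.comp (continuous_sub_left z).continuousAt

lemma tendsto_shiftIntegral_atTop (hmono : Monotone h) (hnonneg : 0 ≤ h)
    (hzero : ∀ᶠ t in atBot, h t = 0) (hint : Integrable h P) :
    Tendsto (shiftIntegral h P) atTop (𝓝 0) := by
  rw [← integral_zero ℝ ℝ (μ := P)]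
  refine tendsto_integral_filter_of_dominated_convergence h
    (Eventually.of_forall fun θ =>
      (hmono.measurable.comp (measurable_id.sub_const θ)).aestronglyMeasurable) ?_ hint ?_
  · filter_upwards [eventually_ge_atTop 0] with θ hθ
    refine ae_of_all _ fun z => ?_
    rw [Real.norm_eq_abs, abs_of_nonneg (hnonneg _)]
    exact hmono (by linarith)
  · refine ae_of_all _ fun z => tendsto_const_nhds.congr' ?_
    have : Tendsto (fun θ => z - θ) atTop atBot :=
      tendsto_atBot_add_const_left _ z tendsto_neg_atTop_atBot
    filter_upwards [this.eventually hzero] with θ hθ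
    exact hθ.symm

lemma tendsto_shiftIntegral_atBot (hanti : Antitone h) (hnonneg : 0 ≤ h)
    (hzero : ∀ᶠ t in atTop, h t = 0) (hint : Integrable h P) :
    Tendsto (shiftIntegral h P) atBot (𝓝 0) := by
  rw [← integral_zero ℝ ℝ (μ := P)]
  refine tendsto_integral_filter_of_dominated_convergence h
    (Eventually.of_forall fun θ =>
      (hanti.measurable.comp (measurable_id.sub_const θ)).aestronglyMeasurable) ?_ hint ?_
  · filter_upwards [eventually_le_atBot 0] with θ hθ
    refine ae_of_all _ fun z => ?_
    rw [Real.norm_eq_abs, abs_of_nonneg (hnonneg _)]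
    exact hanti (by linarith)
  · refine ae_of_all _ fun z => tendsto_const_nhds.congr' ?_
    have : Tendsto (fun θ => z - θ) atBot atTop :=
      tendsto_atTop_add_const_left _ z tendsto_neg_atBot_atTop
    filter_upwards [this.eventually hzero] with θ hθ
    exact hθ.symm

lemma monotone_shiftIntegral (hanti : Antitone h)
    (hint : ∀ θ, Integrable (fun z => h (z - θ)) P) : Monotone (shiftIntegral h P) :=
  fun _ _ hθ => integral_mono (hint _) (hint _) fun _ => hanti (by linarith)

lemma antitone_shiftIntegral (hmono : Monotone h)
    (hint : ∀ θ, Integrable (fun z => h (z - θ)) P) : Antitone (shiftIntegral h P) :=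
  fun _ _ hθ => integral_mono (hint _) (hint _) fun _ => hmono (by linarith)

lemma shiftIntegral_pos (hnonneg : 0 ≤ h) {θ : ℝ} (hint : Integrable (fun z => h (z - θ)) P)
    {s : Set ℝ} (hs : 0 < P s) (hne : ∀ z ∈ s, h (z - θ) ≠ 0) : 0 < shiftIntegral h P θ :=
  (integral_pos_iff_support_of_nonneg (f := fun z => h (z - θ)) (fun z => hnonneg (z - θ)) hint).2
    (hs.trans_le (measure_mono fun z hz => hne z hz))

lemma shiftIntegral_negPart_add_posPart (hψ : Monotone ψ) {θ : ℝ}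
    (hint : Integrable (fun z => |ψ (z - θ)|) P) :
    shiftIntegral ψ⁻ P θ + shiftIntegral ψ⁺ P θ = ∫ z, |ψ (z - θ)| ∂P := by
  have hneg : Integrable (fun z => ψ⁻ (z - θ)) P := (hψ.integrable_comp_sub hint).neg_part
  have hpos : Integrable (fun z => ψ⁺ (z - θ)) P := (hψ.integrable_comp_sub hint).pos_part
  rw [shiftIntegral, shiftIntegral, ← integral_add hneg hpos]
  exact integral_congr_ae (ae_of_all _ fun z => (add_comm _ _).trans (posPart_add_negPart _))

end shiftIntegral

lemma exists_measure_Iio_pos (P : Measure ℝ) [NeZero P] : ∃ θ, 0 < P (Iio θ) := by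
  obtain ⟨x, hx⟩ := ((tendsto_measure_Iic_atTop P).eventually_const_lt
    (Measure.measure_univ_pos.2 (NeZero.ne P))).exists
  exact ⟨x + 1, hx.trans_le (measure_mono (Iic_subset_Iio.2 (lt_add_one x)))⟩

lemma exists_measure_Ioi_pos (P : Measure ℝ) [NeZero P] : ∃ θ, 0 < P (Ioi θ) := by
  obtain ⟨x, hx⟩ := ((tendsto_measure_Ici_atBot P).eventually_const_lt
    (Measure.measure_univ_pos.2 (NeZero.ne P))).exists
  exact ⟨x - 1, hx.trans_le (measure_mono (Ici_subset_Ioi.2 (sub_one_lt x)))⟩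

lemma Monotone.ae_continuousAt_comp_sub {ψ : ℝ → ℝ} (hψ : Monotone ψ) (P : Measure ℝ)
    [NullSingletonClass P] (θ : ℝ) : ∀ᵐ z ∂P, ContinuousAt ψ (z - θ) :=
  ((hψ.countable_not_continuousAt.preimage sub_left_injective).ae_notMem P).mono
    fun _ hz => not_not.1 hz

lemma tendsto_div_add_of_tendsto_zero {ι : Type*} {l : Filter ι} {f g : ι → ℝ} {c : ℝ}
    (hf : Tendsto f l (𝓝 0)) (hf0 : 0 ≤ f) (hc : 0 < c) (hg : ∀ᶠ i in l, c ≤ g i) :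
    Tendsto (fun i => f i / (f i + g i)) l (𝓝 0) := by
  have hfg : ∀ᶠ i in l, c ≤ f i + g i :=
    hg.mono fun i hi => hi.trans (le_add_of_nonneg_left (hf0 i))
  refine squeeze_zero' ?_ ?_ (by simpa using hf.div_const c)
  · filter_upwards [hfg] with i hi
    exact div_nonneg (hf0 i) (hc.le.trans hi)
  · filter_upwards [hfg] with i hi
    exact div_le_div_of_nonneg_left (hf0 i) hc hi

lemma Continuous.apply_sInf_setOf_le {g : ℝ → ℝ} (hg : Continuous g) {a : ℝ}
    (hbot : ∀ᶠ x in atBot, g x < a) (htop : ∀ᶠ x in atTop, a ≤ g x) :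
    g (sInf {x | a ≤ g x}) = a := by
  set S := {x | a ≤ g x}
  obtain ⟨b, hb⟩ := eventually_atBot.1 hbot
  have hbdd : BddBelow S := ⟨b, fun x hx => not_lt.1 fun hxb => (hb x hxb.le).not_ge hx⟩
  have hmem : sInf S ∈ S := (isClosed_le continuous_const hg).csInf_mem htop.exists hbdd
  refine le_antisymm ?_ hmem
  refine le_of_tendsto (hg.continuousAt.continuousWithinAt (s := Iio (sInf S))).tendsto ?_
  filter_upwards [self_mem_nhdsWithin] with x (hx : x < sInf S)
  exact (not_le.1 fun hxS => hx.not_ge (csInf_le hbdd hxS)).le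

section Gfun

variable {ρ ψ : ℝ → ℝ} {P : Measure ℝ}

lemma IsLeftDeriv.abs_mul_ite_eq_negPart (hψ : IsLeftDeriv ρ ψ) (hρ : LossClass ρ) (z θ : ℝ) :
    |ψ (z - θ)| * (if z ≤ θ then 1 else 0) = (ψ (z - θ))⁻ := by
  split_ifs with hz
  · have hneg := hψ.nonpos_of_nonpos hρ (sub_nonpos.2 hz)
    rw [mul_one, abs_of_nonpos hneg, negPart_eq_neg.2 hneg]
  · rw [mul_zero, eq_comm, negPart_eq_zero]
    exact (hψ.pos_of_pos hρ (sub_pos.2 (not_le.1 hz))).le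

lemma Gfun_eq (hρ : LossClass ρ) (hψ : IsLeftDeriv ρ ψ)
    (hint : ∀ θ, Integrable (fun z => |ψ (z - θ)|) P) (θ : ℝ) :
    Gfun ψ P θ = shiftIntegral ψ⁻ P θ / (shiftIntegral ψ⁻ P θ + shiftIntegral ψ⁺ P θ) := by
  rw [shiftIntegral_negPart_add_posPart (hψ.monotone hρ.1) (hint θ), Gfun]
  simp only [hψ.abs_mul_ite_eq_negPart hρ]
  rfl

lemma continuous_Gfun (hρ : LossClass ρ) (hψ : IsLeftDeriv ρ ψ) [IsProbabilityMeasure P]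
    (hP1 : ∀ θ, P {θ} < 1) (hint : ∀ θ, Integrable (fun z => |ψ (z - θ)|) P)
    (hcont : ∀ θ, ∀ᵐ z ∂P, ContinuousAt ψ (z - θ)) : Continuous (Gfun ψ P) := by
  have hmono := hψ.monotone hρ.1
  have hcont_shift {h : ℝ → ℝ} (hh : Continuous h) (hle : ∀ t, |h (ψ t)| ≤ |ψ t|) :
      Continuous (shiftIntegral (h ∘ ψ) P) :=
    continuous_iff_continuousAt.2 fun θ => continuousAt_shiftIntegral hmono hint
      (hh.measurable.comp hmono.measurable) hle
      ((hcont θ).mono fun z hz => hh.continuousAt.comp hz)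
  have hN : Continuous (shiftIntegral ψ⁻ P) := hcont_shift continuous_negPart fun t => by
    rw [abs_of_nonneg (negPart_nonneg _)]
    exact max_le (neg_le_abs _) (abs_nonneg _)
  have hM : Continuous (shiftIntegral ψ⁺ P) := hcont_shift continuous_posPart fun t => by
    rw [abs_of_nonneg (posPart_nonneg _)]
    exact max_le (le_abs_self _) (abs_nonneg _)
  have hpos (θ : ℝ) : 0 < shiftIntegral ψ⁻ P θ + shiftIntegral ψ⁺ P θ := by
    rw [shiftIntegral_negPart_add_posPart hmono (hint θ)]
    refine shiftIntegral_pos (h := |ψ|) (s := {θ}ᶜ) (fun _ => abs_nonneg _) (hint θ) ?_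
      fun z hz => abs_ne_zero.2 (hψ.ne_zero hρ (sub_ne_zero.2 hz))
    rw [prob_compl_eq_one_sub (measurableSet_singleton θ)]
    exact tsub_pos_of_lt (hP1 θ)
  rw [funext (Gfun_eq hρ hψ hint)]
  exact hN.div (hN.add hM) fun θ => (hpos θ).ne'

lemma tendsto_Gfun_atBot (hρ : LossClass ρ) (hψ : IsLeftDeriv ρ ψ) [NeZero P]
    (hint : ∀ θ, Integrable (fun z => |ψ (z - θ)|) P) : Tendsto (Gfun ψ P) atBot (𝓝 0) := by
  have hmono := hψ.monotone hρ.1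
  have hneg θ : Integrable (fun z => ψ⁻ (z - θ)) P := (hmono.integrable_comp_sub (hint θ)).neg_part
  have hpos θ : Integrable (fun z => ψ⁺ (z - θ)) P := (hmono.integrable_comp_sub (hint θ)).pos_part
  have hN : Tendsto (shiftIntegral ψ⁻ P) atBot (𝓝 0) := by
    refine tendsto_shiftIntegral_atBot (negPart_anti.comp_monotone hmono)
      (fun _ => negPart_nonneg _) ?_ (by simpa only [sub_zero] using hneg 0)
    filter_upwards [eventually_gt_atTop 0] with t ht
    exact negPart_eq_zero.2 (hψ.pos_of_pos hρ ht).le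
  obtain ⟨θ₁, hθ₁⟩ := exists_measure_Ioi_pos P
  have hM : 0 < shiftIntegral ψ⁺ P θ₁ := shiftIntegral_pos (fun _ => posPart_nonneg _) (hpos θ₁)
    hθ₁ fun z hz => (posPart_pos (hψ.pos_of_pos hρ (sub_pos.2 hz))).ne'
  rw [funext (Gfun_eq hρ hψ hint)]
  refine tendsto_div_add_of_tendsto_zero hN (fun θ => integral_nonneg fun _ => negPart_nonneg _)
    hM ?_
  filter_upwards [eventually_le_atBot θ₁] with θ hθ
  exact antitone_shiftIntegral (posPart_mono.comp hmono) hpos hθ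

lemma tendsto_Gfun_atTop (hρ : LossClass ρ) (hψ : IsLeftDeriv ρ ψ) [NeZero P]
    (hint : ∀ θ, Integrable (fun z => |ψ (z - θ)|) P) : Tendsto (Gfun ψ P) atTop (𝓝 1) := by
  have hmono := hψ.monotone hρ.1
  have hneg θ : Integrable (fun z => ψ⁻ (z - θ)) P := (hmono.integrable_comp_sub (hint θ)).neg_part
  have hpos θ : Integrable (fun z => ψ⁺ (z - θ)) P := (hmono.integrable_comp_sub (hint θ)).pos_part
  have hM : Tendsto (shiftIntegral ψ⁺ P) atTop (𝓝 0) := by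
    refine tendsto_shiftIntegral_atTop (posPart_mono.comp hmono)
      (fun _ => posPart_nonneg _) ?_ (by simpa only [sub_zero] using hpos 0)
    filter_upwards [eventually_le_atBot 0] with t ht
    exact posPart_eq_zero.2 (hψ.nonpos_of_nonpos hρ ht)
  obtain ⟨θ₀, hθ₀⟩ := exists_measure_Iio_pos P
  have hN : 0 < shiftIntegral ψ⁻ P θ₀ := shiftIntegral_pos (fun _ => negPart_nonneg _) (hneg θ₀)
    hθ₀ fun z hz => (negPart_pos (hψ.neg_of_neg hρ (sub_neg.2 hz))).ne'
  have hNθ : ∀ᶠ θ in atTop, shiftIntegral ψ⁻ P θ₀ ≤ shiftIntegral ψ⁻ P θ := by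
    filter_upwards [eventually_ge_atTop θ₀] with θ hθ
    exact monotone_shiftIntegral (negPart_anti.comp_monotone hmono) hneg hθ
  have hratio := tendsto_div_add_of_tendsto_zero hM
    (fun θ => integral_nonneg fun _ => posPart_nonneg _) hN hNθ
  -- `G = N / (N + M) = 1 - M / (M + N)` as soon as `N > 0`
  refine (by simpa using tendsto_const_nhds.sub hratio : Tendsto _ atTop (𝓝 (1 : ℝ))).congr' ?_
  filter_upwards [hNθ] with θ hθ
  have hden : shiftIntegral ψ⁺ P θ + shiftIntegral ψ⁻ P θ ≠ 0 :=
    (add_pos_of_nonneg_of_pos (integral_nonneg fun _ => posPart_nonneg _) (hN.trans_le hθ)).ne'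
  rw [Gfun_eq hρ hψ hint, add_comm (shiftIntegral ψ⁻ P θ)]
  field_simp
  ring

end Gfun

theorem stmt_4 (α : ℝ) (hα : α ∈ Set.Ioo (0 : ℝ) 1)
    (ρ ψ : ℝ → ℝ) (hρ : LossClass ρ) (hψ : IsLeftDeriv ρ ψ)
    (P : Measure ℝ) [IsProbabilityMeasure P]
    (hP1 : ∀ θ : ℝ, P {θ} < 1)
    (hP2 : ∀ θ : ℝ, Integrable (fun z => |ψ (z - θ)|) P)
    (hcont : Continuous ψ ∨ ∀ θ : ℝ, P {θ} = 0) :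
    ContinuousAt (Gfun ψ P) (MQuant ψ P α) ∧
    Gfun ψ P (MQuant ψ P α) = α := by
  have hψ_ae (θ : ℝ) : ∀ᵐ z ∂P, ContinuousAt ψ (z - θ) := by
    rcases hcont with hc | hatoms
    · exact ae_of_all _ fun z => hc.continuousAt
    · have : NullSingletonClass P := ⟨hatoms⟩
      exact (hψ.monotone hρ.1).ae_continuousAt_comp_sub P θ
  have hG := continuous_Gfun hρ hψ hP1 hP2 hψ_ae
  exact ⟨hG.continuousAt, hG.apply_sInf_setOf_le
    ((tendsto_Gfun_atBot hρ hψ hP2).eventually (gt_mem_nhds hα.1))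
    ((tendsto_Gfun_atTop hρ hψ hP2).eventually (le_mem_nhds hα.2))⟩
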